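/- arXiv:2403.00447 — 3 statements merged into one kernel-verified Lean document; each statement's English description precedes it below -/
import Mathlib

section
/- Let S = {x : h(x) ≥ 0} be compact with h C¹, ∇h locally Lipschitz, ∇h ≠ 0 on {h = 0}, and f : ℝᵐ × ℝⁿ → ℝⁿ locally Lipschitz. Then the CBF vector field (z,x) ↦ f_cbf,α(z,x) is locally Lipschitz on ℝᵐ × U for any open set U on which ∇h ≠ 0 wherever the min-term is active; in particular f_cbf,α is continuous wherever ∇h(x) ≠ 0 or ∇h(x)ᵀf(z,x) + α h(x) > 0. -/
/-!
Near a point where `⟪∇h, Q ∇h⟫ > 0` the denominator stays above some `c > 0`, so its inverse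
agrees there with the globally Lipschitz `t ↦ (max c t)⁻¹`; the CBF field then agrees nearby with a
combination of locally Lipschitz maps by sums, `min`, products and bounded bilinear maps. Where
`⟪∇h, f⟫ + α h > 0` the `min`-term vanishes nearby, so the field coincides with `f` there.
-/

open Filter
open scoped RealInnerProductSpace Topology NNReal

section LocallyLipschitz

variable {X : Type*} [PseudoEMetricSpace X]

theorem LocallyLipschitz.clm_apply₂ {E F G : Type*} [NormedAddCommGroup E] [NormedSpace ℝ E]
    [NormedAddCommGroup F] [NormedSpace ℝ F] [NormedAddCommGroup G] [NormedSpace ℝ G]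
    (B : E →L[ℝ] F →L[ℝ] G) {u : X → E} {v : X → F}
    (hu : LocallyLipschitz u) (hv : LocallyLipschitz v) :
    LocallyLipschitz fun x => B (u x) (v x) :=
  (B.isBoundedBilinearMap.contDiff (n := 1)).locallyLipschitz.comp (hu.prodMk hv)

theorem LocallyLipschitz.inner {E : Type*} [NormedAddCommGroup E] [InnerProductSpace ℝ E]
    {u v : X → E} (hu : LocallyLipschitz u) (hv : LocallyLipschitz v) :
    LocallyLipschitz fun x => ⟪u x, v x⟫ :=
  LocallyLipschitz.clm_apply₂ (innerSL ℝ) hu hv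

theorem LocallyLipschitz.smul {E : Type*} [NormedAddCommGroup E] [NormedSpace ℝ E]
    {u : X → ℝ} {v : X → E} (hu : LocallyLipschitz u) (hv : LocallyLipschitz v) :
    LocallyLipschitz fun x => u x • v x :=
  LocallyLipschitz.clm_apply₂ (ContinuousLinearMap.lsmul ℝ ℝ) hu hv

theorem lipschitzWith_inv_max {c : ℝ} (hc : 0 < c) :
    LipschitzWith (c ^ 2)⁻¹.toNNReal fun t : ℝ => (max c t)⁻¹ := by
  refine LipschitzWith.of_dist_le' fun x y => ?_
  have hx : c ≤ max c x := le_max_left _ _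
  have hy : c ≤ max c y := le_max_left _ _
  have hnum : |max c y - max c x| ≤ |x - y| := by
    rw [max_comm c y, max_comm c x, abs_sub_comm x y]
    exact abs_max_sub_max_le_abs y x c
  have hden : c ^ 2 ≤ max c x * max c y := by
    rw [pow_two]
    exact mul_le_mul hx hy hc.le (hc.le.trans hx)
  calc dist (max c x)⁻¹ (max c y)⁻¹ = |max c y - max c x| / (max c x * max c y) := by
        rw [Real.dist_eq, inv_sub_inv (by positivity) (by positivity), abs_div,
          abs_of_pos (mul_pos (hc.trans_le hx) (hc.trans_le hy))]
    _ ≤ |x - y| / c ^ 2 := div_le_div₀ (abs_nonneg _) hnum (by positivity) hden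
    _ = (c ^ 2)⁻¹ * dist x y := by rw [Real.dist_eq, div_eq_inv_mul]

theorem LocallyLipschitz.exists_eventuallyEq_inv {D : X → ℝ} (hD : LocallyLipschitz D) {p : X}
    (hp : 0 < D p) :
    ∃ ι : X → ℝ, LocallyLipschitz ι ∧ (fun x => (D x)⁻¹) =ᶠ[𝓝 p] ι := by
  refine ⟨fun x => (max (D p / 2) (D x))⁻¹,
    (lipschitzWith_inv_max (half_pos hp)).locallyLipschitz.comp hD, ?_⟩
  filter_upwards [hD.continuous.continuousAt.eventually (lt_mem_nhds (half_lt_self hp))] with x hx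
  rw [max_eq_right hx.le]

theorem LocallyLipschitz.exists_mem_nhds_lipschitzOnWith_of_eventuallyEq {Y : Type*}
    [PseudoEMetricSpace Y] {F G : X → Y} (hG : LocallyLipschitz G) {p : X}
    (hFG : F =ᶠ[𝓝 p] G) :
    ∃ t ∈ 𝓝 p, ∃ C : ℝ≥0, LipschitzOnWith C F t := by
  obtain ⟨C, t, ht, hC⟩ := hG p
  refine ⟨t ∩ {x | F x = G x}, inter_mem ht hFG, C, fun x hx y hy => ?_⟩
  rw [hx.2, hy.2]
  exact hC hx.1 hy.1

end LocallyLipschitz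

section CBF

variable {X E : Type*} [PseudoEMetricSpace X] [NormedAddCommGroup E] [InnerProductSpace ℝ E]

/-- `f_cbf,α` over an abstract state space: `φ = f`, `g = ∇h`, `a = ⟪∇h, f⟫ + α h`, `Q = P⁻¹`. -/
noncomputable def cbfField (φ g : X → E) (a : X → ℝ) (Q : E →L[ℝ] E) (x : X) : E :=
  φ x - (min 0 (a x) * ⟪g x, Q (g x)⟫⁻¹) • Q (g x)

variable {φ g : X → E} {a : X → ℝ} {Q : E →L[ℝ] E}

theorem cbfField_exists_mem_nhds_lipschitzOnWith (hφ : LocallyLipschitz φ)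
    (hg : LocallyLipschitz g) (ha : LocallyLipschitz a) {p : X} (hp : 0 < ⟪g p, Q (g p)⟫) :
    ∃ t ∈ 𝓝 p, ∃ C : ℝ≥0, LipschitzOnWith C (cbfField φ g a Q) t := by
  have hQg : LocallyLipschitz fun x => Q (g x) := Q.lipschitz.locallyLipschitz.comp hg
  obtain ⟨ι, hι, hDι⟩ := (hg.inner hQg).exists_eventuallyEq_inv hp
  have hG : LocallyLipschitz fun x => φ x - (min 0 (a x) * ι x) • Q (g x) :=
    hφ.sub (((ha.const_min 0).smul hι).smul hQg)
  refine hG.exists_mem_nhds_lipschitzOnWith_of_eventuallyEq ?_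
  filter_upwards [hDι] with x hx
  simp only [cbfField, hx]

theorem cbfField_eventuallyEq_of_pos {p : X} (ha : ContinuousAt a p) (hp : 0 < a p) :
    cbfField φ g a Q =ᶠ[𝓝 p] φ := by
  filter_upwards [ha.eventually (lt_mem_nhds hp)] with x hx
  simp [cbfField, min_eq_left hx.le]

end CBF

theorem stmt13_general {m n : ℕ}
    (f : EuclideanSpace ℝ (Fin m) → EuclideanSpace ℝ (Fin n) → EuclideanSpace ℝ (Fin n))
    (hf : LocallyLipschitz fun p : EuclideanSpace ℝ (Fin m) × EuclideanSpace ℝ (Fin n) =>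
      f p.1 p.2)
    (h : EuclideanSpace ℝ (Fin n) → ℝ) (hh : ContDiff ℝ 1 h)
    (hgradLip : LocallyLipschitz (gradient h))
    (Q : EuclideanSpace ℝ (Fin n) →L[ℝ] EuclideanSpace ℝ (Fin n))
    (hQpos : ∀ w : EuclideanSpace ℝ (Fin n), w ≠ 0 → 0 < ⟪w, Q w⟫)
    (α : ℝ)
    (F : EuclideanSpace ℝ (Fin m) × EuclideanSpace ℝ (Fin n) → EuclideanSpace ℝ (Fin n))
    (hF : ∀ p, F p = f p.1 p.2 -
      (min 0 (⟪gradient h p.2, f p.1 p.2⟫ + α * h p.2) *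
        (⟪gradient h p.2, Q (gradient h p.2)⟫)⁻¹) • Q (gradient h p.2))
    (U : Set (EuclideanSpace ℝ (Fin n)))
    (hUgrad : ∀ x ∈ U, gradient h x ≠ 0) :
    (∀ p : EuclideanSpace ℝ (Fin m) × EuclideanSpace ℝ (Fin n), p.2 ∈ U →
      ∃ t ∈ 𝓝 p, ∃ C : ℝ≥0, LipschitzOnWith C F t) ∧
    (∀ p : EuclideanSpace ℝ (Fin m) × EuclideanSpace ℝ (Fin n),
      (gradient h p.2 ≠ 0 ∨ 0 < ⟪gradient h p.2, f p.1 p.2⟫ + α * h p.2) →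
      ContinuousAt F p) := by
  have hsnd : LocallyLipschitz
      (Prod.snd : EuclideanSpace ℝ (Fin m) × EuclideanSpace ℝ (Fin n) → _) :=
    LipschitzWith.prod_snd.locallyLipschitz
  have hg := hgradLip.comp hsnd
  have ha : LocallyLipschitz fun p : EuclideanSpace ℝ (Fin m) × EuclideanSpace ℝ (Fin n) =>
      ⟪gradient h p.2, f p.1 p.2⟫ + α * h p.2 :=
    (hg.inner hf).add ((LocallyLipschitz.const α).smul (hh.locallyLipschitz.comp hsnd))
  have hF' : F = cbfField (fun p => f p.1 p.2) (fun p => gradient h p.2)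
      (fun p => ⟪gradient h p.2, f p.1 p.2⟫ + α * h p.2) Q := funext hF
  have hlip : ∀ p : EuclideanSpace ℝ (Fin m) × EuclideanSpace ℝ (Fin n), gradient h p.2 ≠ 0 →
      ∃ t ∈ 𝓝 p, ∃ C : ℝ≥0, LipschitzOnWith C F t := fun p hp =>
    hF' ▸ cbfField_exists_mem_nhds_lipschitzOnWith hf hg ha (hQpos _ hp)
  refine ⟨fun p hp => hlip p (hUgrad _ hp), fun p hp => ?_⟩
  rcases hp with hp | hp
  · obtain ⟨t, ht, C, hC⟩ := hlip p hp
    exact hC.continuousOn.continuousAt ht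
  · rw [hF']
    exact hf.continuous.continuousAt.congr
      (cbfField_eventuallyEq_of_pos ha.continuous.continuousAt hp).symm

/-- local Lipschitz continuity / continuity of the CBF vector
field where the gradient is nonzero or the CBF constraint is strictly inactive. -/
theorem stmt13 {m n : ℕ}
    (f : EuclideanSpace ℝ (Fin m) → EuclideanSpace ℝ (Fin n) → EuclideanSpace ℝ (Fin n))
    (hf : LocallyLipschitz fun p : EuclideanSpace ℝ (Fin m) × EuclideanSpace ℝ (Fin n) =>
      f p.1 p.2)
    (h : EuclideanSpace ℝ (Fin n) → ℝ) (hh : ContDiff ℝ 1 h)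
    (hgradLip : LocallyLipschitz (gradient h))
    (Q : EuclideanSpace ℝ (Fin n) →L[ℝ] EuclideanSpace ℝ (Fin n))
    (hQpos : ∀ w : EuclideanSpace ℝ (Fin n), w ≠ 0 → 0 < ⟪w, Q w⟫)
    (α : ℝ) (hα : 0 < α)
    (F : EuclideanSpace ℝ (Fin m) × EuclideanSpace ℝ (Fin n) → EuclideanSpace ℝ (Fin n))
    (hF : ∀ p, F p = f p.1 p.2 -
      (min 0 (⟪gradient h p.2, f p.1 p.2⟫ + α * h p.2) *
        (⟪gradient h p.2, Q (gradient h p.2)⟫)⁻¹) • Q (gradient h p.2))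
    (U : Set (EuclideanSpace ℝ (Fin n))) (hU : IsOpen U)
    (hUgrad : ∀ x ∈ U, gradient h x ≠ 0) :
    (∀ p : EuclideanSpace ℝ (Fin m) × EuclideanSpace ℝ (Fin n), p.2 ∈ U →
      ∃ t ∈ 𝓝 p, ∃ C : ℝ≥0, LipschitzOnWith C F t) ∧
    (∀ p : EuclideanSpace ℝ (Fin m) × EuclideanSpace ℝ (Fin n),
      (gradient h p.2 ≠ 0 ∨ 0 < ⟪gradient h p.2, f p.1 p.2⟫ + α * h p.2) →
      ContinuousAt F p) :=
  stmt13_general f hf h hh hgradLip Q hQpos α F hF U hUgrad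
end

section
/- Let S be a closed set with normal cone map N_S having closed graph, and suppose φ : [0,T] → ℝᵐ × ℝⁿ is an absolutely continuous solution of the differential inclusion (ζ̇, ξ̇) ∈ (g(ζ,ξ), f(ζ,ξ) − P⁻¹N_S(ξ) ∩ δ𝔹) with ξ(t) ∈ S for a.e. t, where δ ≥ √(λ_max(P)/λ_min(P))·sup‖f‖ along the trajectory. If additionally S is convex and the P-projection characterization Π_S^P(ξ, f) = f − P⁻¹η with η the unique minimizer of ‖f − P⁻¹η‖²_P over η ∈ N_S(ξ) holds, then φ is a solution of ξ̇ = Π^P_S(ξ, f(ζ,ξ)) if and only if it solves the normal-cone inclusion. -/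
/-!
At an interior time the velocity `μ` of a trajectory staying in the convex set `S` can be shifted
by every multiple, of either sign, of a chord direction `z - ξ t` (`z ∈ S`) without leaving the
tangent cone. So if `μ` minimizes the `P`-distance to `f` over the tangent cone, the first-order
condition along these lines makes `η = P (f - μ)` orthogonal to all chords, hence to the whole
tangent cone (Mathlib's `tangentConeAt ℝ` allows scalings of both signs, so it is symmetric and
polarity amounts to orthogonality); comparing with the competitor `0` bounds
`‖P⁻¹ η‖ = ‖f - μ‖` by `√(λmax / λmin) ‖f‖`. Conversely, if `μ = f - P⁻¹ η` with `η` polar to the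
tangent cone, then `±μ` lie in the cone, so `⟪η, μ⟫ = 0`, and expanding the quadratic around `μ`
shows that `μ` is the minimizer.
-/

open Set Filter MeasureTheory
open scoped RealInnerProductSpace Topology

section TangentCone

variable {E : Type*} [NormedAddCommGroup E] [NormedSpace ℝ E] {S : Set E} {x y : E}

theorem neg_mem_tangentConeAt (hy : y ∈ tangentConeAt ℝ S x) : -y ∈ tangentConeAt ℝ S x := by
  obtain ⟨α, l, hl, c, d, hd, hds, hcd⟩ := exists_fun_of_mem_tangentConeAt hy
  exact mem_tangentConeAt_of_seq l (-c) d hd hds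
    (by simpa only [Pi.neg_apply, neg_smul] using hcd.neg)

theorem ContinuousLinearMap.map_eq_zero_of_mem_tangentConeAt {F : Type*} [NormedAddCommGroup F]
    [NormedSpace ℝ F] (ℓ : E →L[ℝ] F) (h : ∀ z ∈ S, ℓ (z - x) = 0)
    (hy : y ∈ tangentConeAt ℝ S x) : ℓ y = 0 := by
  obtain ⟨α, l, hl, c, d, -, hds, hcd⟩ := exists_fun_of_mem_tangentConeAt hy
  refine tendsto_nhds_unique ((ℓ.continuous.tendsto y).comp hcd) (tendsto_const_nhds.congr' ?_)
  filter_upwards [hds] with k hk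
  simpa using congrArg (c k • ·) (h _ hk).symm

/-- Move from `ξ u` towards `z` by the step `a * (u - t)`, letting `u → t` from the side on which
this step is nonnegative. -/
theorem Convex.add_smul_sub_mem_tangentConeAt (hS : Convex ℝ S) {ξ : ℝ → E} {t : ℝ} {μ z : E}
    (hξ : ∀ᶠ u in 𝓝 t, ξ u ∈ S) (hμ : HasDerivAt ξ μ t) (hz : z ∈ S) (a : ℝ) :
    μ + a • (z - ξ t) ∈ tangentConeAt ℝ S (ξ t) := by
  obtain ⟨l, hl, hlne, hsign⟩ : ∃ l ≤ 𝓝[≠] t, l.NeBot ∧ ∀ᶠ u in l, 0 ≤ a * (u - t) := by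
    rcases le_total 0 a with ha | ha
    · refine ⟨𝓝[>] t, nhdsWithin_mono _ fun u hu => ne_of_gt hu, inferInstance, ?_⟩
      filter_upwards [self_mem_nhdsWithin] with u hu
      exact mul_nonneg ha (sub_nonneg.2 (le_of_lt hu))
    · refine ⟨𝓝[<] t, nhdsWithin_mono _ fun u hu => ne_of_lt hu, inferInstance, ?_⟩
      filter_upwards [self_mem_nhdsWithin] with u hu
      exact mul_nonneg_of_nonpos_of_nonpos ha (sub_nonpos.2 (le_of_lt hu))
  have hlt : l ≤ 𝓝 t := hl.trans nhdsWithin_le_nhds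
  have hcont : ContinuousAt ξ t := hμ.continuousAt
  refine mem_tangentConeAt_of_seq l (fun u => (u - t)⁻¹)
    (fun u => (ξ u - ξ t) + (a * (u - t)) • (z - ξ u)) ?_ ?_ ?_
  · have : ContinuousAt (fun u => (ξ u - ξ t) + (a * (u - t)) • (z - ξ u)) t := by fun_prop
    simpa using this.tendsto.mono_left hlt
  · have hstep : Tendsto (fun u => a * (u - t)) (𝓝 t) (𝓝 0) := by
      simpa using (tendsto_id (x := 𝓝 t)).sub_const t |>.const_mul a
    have hsmall : ∀ᶠ u in 𝓝 t, a * (u - t) ≤ 1 := hstep.eventually (eventually_le_nhds one_pos)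
    filter_upwards [hsign, hlt hsmall, hlt hξ] with u hu0 hu1 hu
    rw [← add_assoc, add_sub_cancel]
    exact hS.add_smul_sub_mem hu hz ⟨hu0, hu1⟩
  · have hslope := (hasDerivAt_iff_tendsto_slope.1 hμ).mono_left hl
    have hdir : Tendsto (fun u => a • (z - ξ u)) l (𝓝 (a • (z - ξ t))) :=
      ((tendsto_const_nhds.sub hcont.tendsto).const_smul a).mono_left hlt
    refine (hslope.add hdir).congr' ?_
    filter_upwards [hl self_mem_nhdsWithin] with u hu
    rw [slope_def_module, smul_add, smul_smul]
    congr 2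
    field_simp [sub_ne_zero.2 hu]

end TangentCone

theorem le_sqrt_div_mul_of_mul_sq_le {a b l L : ℝ} (hl : 0 < l) (ha : 0 ≤ a) (hb : 0 ≤ b)
    (h : l * a ^ 2 ≤ L * b ^ 2) : a ≤ √(L / l) * b :=
  calc a = √(a ^ 2) := (Real.sqrt_sq ha).symm
    _ ≤ √(L / l * b ^ 2) := Real.sqrt_le_sqrt (by rw [div_mul_eq_mul_div, le_div_iff₀ hl]; linarith)
    _ = √(L / l) * b := by rw [Real.sqrt_mul' _ (sq_nonneg b), Real.sqrt_sq hb]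

section Quadratic

variable {E : Type*} [NormedAddCommGroup E] [InnerProductSpace ℝ E] {P : E →L[ℝ] E}

theorem inner_map_add_add (hP : ∀ a b : E, ⟪P a, b⟫ = ⟪a, P b⟫) (v w : E) :
    ⟪v + w, P (v + w)⟫ = ⟪v, P v⟫ + 2 * ⟪w, P v⟫ + ⟪w, P w⟫ := by
  have hsymm : ⟪v, P w⟫ = ⟪w, P v⟫ := by rw [real_inner_comm, hP]
  rw [map_add, inner_add_left, inner_add_right, inner_add_right, hsymm]
  ring

theorem inner_map_eq_zero_of_forall_le (hP : ∀ a b : E, ⟪P a, b⟫ = ⟪a, P b⟫) {v w : E}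
    (h : ∀ a : ℝ, ⟪v, P v⟫ ≤ ⟪v + a • w, P (v + a • w)⟫) : ⟪w, P v⟫ = 0 := by
  have hdisc := discrim_le_zero (a := ⟪w, P w⟫) (b := 2 * ⟪w, P v⟫) (c := 0) fun a => by
    have := h a
    rw [inner_map_add_add hP, map_smul, real_inner_smul_left, real_inner_smul_left,
      real_inner_smul_right] at this
    linarith
  rw [discrim] at hdisc
  nlinarith [sq_nonneg ⟪w, P v⟫]

end Quadratic

section ProjectedDynamics

variable {E : Type*} [NormedAddCommGroup E] [InnerProductSpace ℝ E] {S : Set E}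
  {P Q : E →L[ℝ] E} {ξ : ℝ → E} {t : ℝ} {μ F : E}

theorem Convex.inner_map_sub_eq_zero_of_forall_le (hS : Convex ℝ S)
    (hP : ∀ a b : E, ⟪P a, b⟫ = ⟪a, P b⟫) (hξ : ∀ᶠ u in 𝓝 t, ξ u ∈ S) (hμ : HasDerivAt ξ μ t)
    (hmin : ∀ μ' ∈ tangentConeAt ℝ S (ξ t), ⟪μ - F, P (μ - F)⟫ ≤ ⟪μ' - F, P (μ' - F)⟫)
    {w : E} (hw : w ∈ tangentConeAt ℝ S (ξ t)) : ⟪P (F - μ), w⟫ = 0 := by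
  refine (innerSL ℝ (P (F - μ))).map_eq_zero_of_mem_tangentConeAt (fun z hz => ?_) hw
  have hline := inner_map_eq_zero_of_forall_le hP (v := μ - F) (w := z - ξ t) fun a => by
    simpa only [sub_add_eq_add_sub] using
      hmin _ (hS.add_smul_sub_mem_tangentConeAt hξ hμ hz a)
  rw [innerSL_apply_apply, ← neg_sub, map_neg, inner_neg_left, real_inner_comm, hline, neg_zero]

theorem Convex.exists_projection_iff_exists_normal (hS : Convex ℝ S)
    {lmin lmax δ : ℝ} (hlmin : 0 < lmin) (hP : ∀ a b : E, ⟪P a, b⟫ = ⟪a, P b⟫)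
    (hPlow : ∀ w : E, lmin * ‖w‖ ^ 2 ≤ ⟪w, P w⟫) (hPhigh : ∀ w : E, ⟪w, P w⟫ ≤ lmax * ‖w‖ ^ 2)
    (hPQ : ∀ w, P (Q w) = w) (hQP : ∀ w, Q (P w) = w) (hδ : √(lmax / lmin) * ‖F‖ ≤ δ)
    (hξ : ∀ᶠ u in 𝓝 t, ξ u ∈ S) :
    (∃ μ ∈ tangentConeAt ℝ S (ξ t),
        (∀ μ' ∈ tangentConeAt ℝ S (ξ t), ⟪μ - F, P (μ - F)⟫ ≤ ⟪μ' - F, P (μ' - F)⟫) ∧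
        HasDerivAt ξ μ t) ↔
      ∃ η : E, (∀ w ∈ tangentConeAt ℝ S (ξ t), ⟪η, w⟫ ≤ 0) ∧ ‖Q η‖ ≤ δ ∧
        HasDerivAt ξ (F - Q η) t := by
  constructor
  · rintro ⟨μ, -, hmin, hμ⟩
    refine ⟨P (F - μ), fun w hw => (hS.inner_map_sub_eq_zero_of_forall_le hP hξ hμ hmin hw).le,
      ?_, by rwa [hQP, sub_sub_cancel]⟩
    have hzero := hmin 0 (zero_mem_tangentConeAt (subset_closure hξ.self_of_nhds))
    rw [zero_sub, map_neg, inner_neg_neg] at hzero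
    have hF := hPlow (μ - F)
    rw [← norm_neg, neg_sub] at hF
    rw [hQP]
    exact (le_sqrt_div_mul_of_mul_sq_le hlmin (norm_nonneg _) (norm_nonneg _)
      (by linarith [hPhigh F])).trans hδ
  · rintro ⟨η, hη, -, hμ⟩
    set μ := F - Q η with hμdef
    have hT : μ ∈ tangentConeAt ℝ S (ξ t) := by
      simpa using hS.add_smul_sub_mem_tangentConeAt hξ hμ hξ.self_of_nhds 0
    have hημ : ⟪η, μ⟫ = 0 := by
      have hneg := hη _ (neg_mem_tangentConeAt hT)
      rw [inner_neg_right] at hneg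
      exact le_antisymm (hη _ hT) (by linarith)
    refine ⟨μ, hT, fun μ' hμ' => ?_, hμ⟩
    have hPμ : P (μ - F) = -η := by rw [hμdef, sub_sub_cancel_left, map_neg, hPQ]
    have hcross : ⟪μ' - μ, -η⟫ = -⟪η, μ'⟫ := by
      rw [inner_neg_right, inner_sub_left, real_inner_comm, real_inner_comm η μ, hημ, sub_zero]
    rw [show μ' - F = (μ - F) + (μ' - μ) by abel, inner_map_add_add hP, hPμ, hcross]
    nlinarith [hη μ' hμ', hPlow (μ' - μ), sq_nonneg ‖μ' - μ‖]

end ProjectedDynamics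

theorem stmt15_general {m n : ℕ}
    (S : Set (EuclideanSpace ℝ (Fin n))) (hSconv : Convex ℝ S)
    (g : EuclideanSpace ℝ (Fin m) → EuclideanSpace ℝ (Fin n) → EuclideanSpace ℝ (Fin m))
    (f : EuclideanSpace ℝ (Fin m) → EuclideanSpace ℝ (Fin n) → EuclideanSpace ℝ (Fin n))
    (P Q : EuclideanSpace ℝ (Fin n) →L[ℝ] EuclideanSpace ℝ (Fin n))
    (lmin lmax : ℝ) (hlmin : 0 < lmin)
    (hPsym : ∀ a b : EuclideanSpace ℝ (Fin n), ⟪P a, b⟫ = ⟪a, P b⟫)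
    (hPlow : ∀ w : EuclideanSpace ℝ (Fin n), lmin * ‖w‖ ^ 2 ≤ ⟪w, P w⟫)
    (hPhigh : ∀ w : EuclideanSpace ℝ (Fin n), ⟪w, P w⟫ ≤ lmax * ‖w‖ ^ 2)
    (hPQ : ∀ w, P (Q w) = w) (hQP : ∀ w, Q (P w) = w)
    (T : ℝ)
    (ζ : ℝ → EuclideanSpace ℝ (Fin m)) (ξ : ℝ → EuclideanSpace ℝ (Fin n))
    (hξS : ∀ t ∈ Icc (0 : ℝ) T, ξ t ∈ S)
    (δ : ℝ)
    (hδ : ∀ t ∈ Icc (0 : ℝ) T, Real.sqrt (lmax / lmin) * ‖f (ζ t) (ξ t)‖ ≤ δ) :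
    ((∀ᵐ t ∂(volume.restrict (Icc (0 : ℝ) T)),
        HasDerivAt ζ (g (ζ t) (ξ t)) t ∧
        ∃ μ ∈ tangentConeAt ℝ S (ξ t),
          (∀ μ' ∈ tangentConeAt ℝ S (ξ t),
            ⟪μ - f (ζ t) (ξ t), P (μ - f (ζ t) (ξ t))⟫ ≤
              ⟪μ' - f (ζ t) (ξ t), P (μ' - f (ζ t) (ξ t))⟫) ∧
          HasDerivAt ξ μ t) ↔
      (∀ᵐ t ∂(volume.restrict (Icc (0 : ℝ) T)),
        HasDerivAt ζ (g (ζ t) (ξ t)) t ∧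
        ∃ η : EuclideanSpace ℝ (Fin n),
          (∀ w ∈ tangentConeAt ℝ S (ξ t), ⟪η, w⟫ ≤ 0) ∧ ‖Q η‖ ≤ δ ∧
          HasDerivAt ξ (f (ζ t) (ξ t) - Q η) t)) := by
  have hinterior : ∀ᵐ t ∂(volume.restrict (Icc (0 : ℝ) T)), t ∈ Ioo 0 T := by
    rw [← Measure.restrict_congr_set Ioo_ae_eq_Icc]
    exact ae_restrict_mem measurableSet_Ioo
  refine eventually_congr ?_
  filter_upwards [hinterior] with t ht
  refine and_congr_right' (hSconv.exists_projection_iff_exists_normal hlmin hPsym hPlow hPhigh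
    hPQ hQP (hδ t (Ioo_subset_Icc_self ht)) ?_)
  exact eventually_of_mem (Icc_mem_nhds ht.1 ht.2) hξS

/-- equivalence of solutions of the projected dynamical system
and of the truncated-normal-cone differential inclusion, for convex `S`. -/
theorem stmt15 {m n : ℕ}
    (S : Set (EuclideanSpace ℝ (Fin n))) (hScl : IsClosed S) (hSconv : Convex ℝ S)
    (g : EuclideanSpace ℝ (Fin m) → EuclideanSpace ℝ (Fin n) → EuclideanSpace ℝ (Fin m))
    (f : EuclideanSpace ℝ (Fin m) → EuclideanSpace ℝ (Fin n) → EuclideanSpace ℝ (Fin n))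
    (P Q : EuclideanSpace ℝ (Fin n) →L[ℝ] EuclideanSpace ℝ (Fin n))
    (lmin lmax : ℝ) (hlmin : 0 < lmin) (hlmax : lmin ≤ lmax)
    (hPsym : ∀ a b : EuclideanSpace ℝ (Fin n), ⟪P a, b⟫ = ⟪a, P b⟫)
    (hPlow : ∀ w : EuclideanSpace ℝ (Fin n), lmin * ‖w‖ ^ 2 ≤ ⟪w, P w⟫)
    (hPhigh : ∀ w : EuclideanSpace ℝ (Fin n), ⟪w, P w⟫ ≤ lmax * ‖w‖ ^ 2)
    (hPQ : ∀ w, P (Q w) = w) (hQP : ∀ w, Q (P w) = w)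
    (T : ℝ) (hT : 0 < T)
    (ζ : ℝ → EuclideanSpace ℝ (Fin m)) (ξ : ℝ → EuclideanSpace ℝ (Fin n))
    (hζc : ContinuousOn ζ (Icc 0 T)) (hξc : ContinuousOn ξ (Icc 0 T))
    (hξS : ∀ t ∈ Icc (0 : ℝ) T, ξ t ∈ S)
    (δ : ℝ)
    (hδ : ∀ t ∈ Icc (0 : ℝ) T, Real.sqrt (lmax / lmin) * ‖f (ζ t) (ξ t)‖ ≤ δ) :
    ((∀ᵐ t ∂(volume.restrict (Icc (0 : ℝ) T)),
        HasDerivAt ζ (g (ζ t) (ξ t)) t ∧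
        ∃ μ ∈ tangentConeAt ℝ S (ξ t),
          (∀ μ' ∈ tangentConeAt ℝ S (ξ t),
            ⟪μ - f (ζ t) (ξ t), P (μ - f (ζ t) (ξ t))⟫ ≤
              ⟪μ' - f (ζ t) (ξ t), P (μ' - f (ζ t) (ξ t))⟫) ∧
          HasDerivAt ξ μ t) ↔
      (∀ᵐ t ∂(volume.restrict (Icc (0 : ℝ) T)),
        HasDerivAt ζ (g (ζ t) (ξ t)) t ∧
        ∃ η : EuclideanSpace ℝ (Fin n),
          (∀ w ∈ tangentConeAt ℝ S (ξ t), ⟪η, w⟫ ≤ 0) ∧ ‖Q η‖ ≤ δ ∧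
          HasDerivAt ξ (f (ζ t) (ξ t) - Q η) t)) :=
  stmt15_general S hSconv g f P Q lmin lmax hlmin hPsym hPlow hPhigh hPQ hQP T ζ ξ hξS δ hδ
end

section
/- Let P ∈ 𝕊₊ⁿ and let η = c·∇h(y)/(∇h(y)ᵀP⁻¹∇h(y)) with c ≤ 0 and ∇h(y) ≠ 0, and suppose ‖∇h(x)‖ ≤ ‖∇h(y)‖ + L·‖x−y‖ and |c| ≤ ‖f‖·‖∇h(x)‖ (Cauchy–Schwarz from c = ∇h(x)ᵀf + αh(x) with h(x) ≥ 0, αh(x) ≤ −∇h(x)ᵀf giving |c| ≤ |∇h(x)ᵀf|). Then ‖P⁻¹η‖ ≤ (1 + L‖x−y‖/‖∇h(y)‖)·(λ_max(P)/λ_min(P))·‖f‖. -/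
open scoped RealInnerProductSpace

/-! The vector `P⁻¹η` is a multiple of `P⁻¹∇h(y)`. Coercivity of `P` gives
`‖P⁻¹∇h(y)‖ ≤ ‖∇h(y)‖ / λ_min`, while the lower bound on `P⁻¹` gives
`∇h(y)ᵀP⁻¹∇h(y) ≥ ‖∇h(y)‖² / λ_max`, so `‖P⁻¹η‖ ≤ (λ_max / λ_min) · |c| / ‖∇h(y)‖`.
Finally `|c| ≤ ‖f‖ (‖∇h(y)‖ + L‖x - y‖)` by the growth bound on `∇h`. -/

section

variable {E : Type*} [NormedAddCommGroup E] [InnerProductSpace ℝ E]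

theorem mul_norm_le_norm_apply_of_coercive {P : E → E} {m : ℝ}
    (hP : ∀ w, m * ‖w‖ ^ 2 ≤ ⟪w, P w⟫) (w : E) : m * ‖w‖ ≤ ‖P w‖ := by
  rcases (norm_nonneg w).eq_or_lt with hw | hw
  · rw [← hw, mul_zero]
    exact norm_nonneg _
  · have h : m * ‖w‖ * ‖w‖ ≤ ‖P w‖ * ‖w‖ := by
      calc m * ‖w‖ * ‖w‖ = m * ‖w‖ ^ 2 := by ring
        _ ≤ ⟪w, P w⟫ := hP w
        _ ≤ ‖w‖ * ‖P w‖ := real_inner_le_norm _ _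
        _ = ‖P w‖ * ‖w‖ := mul_comm _ _
    exact le_of_mul_le_mul_right h hw

theorem norm_apply_smul_div_inner_le {Q : E →ₗ[ℝ] E} {v : E} {lmin lmax : ℝ}
    (hlmin : 0 < lmin) (hlmax : 0 < lmax) (hv : v ≠ 0)
    (hQv : lmin * ‖Q v‖ ≤ ‖v‖) (hvQv : ‖v‖ ^ 2 / lmax ≤ ⟪v, Q v⟫) (c : ℝ) :
    ‖Q ((c / ⟪v, Q v⟫) • v)‖ ≤ |c| / ‖v‖ * (lmax / lmin) := by
  have hv_pos : 0 < ‖v‖ := norm_pos_iff.mpr hv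
  have hlow : 0 < ‖v‖ ^ 2 / lmax := by positivity
  have hpos : 0 < ⟪v, Q v⟫ := hlow.trans_le hvQv
  rw [map_smul, norm_smul, Real.norm_eq_abs, abs_div, abs_of_pos hpos]
  calc |c| / ⟪v, Q v⟫ * ‖Q v‖ = |c| * (‖Q v‖ / ⟪v, Q v⟫) := by ring
    _ ≤ |c| * ((‖v‖ / lmin) / (‖v‖ ^ 2 / lmax)) := by
        gcongr
        rwa [le_div_iff₀' hlmin]
    _ = |c| / ‖v‖ * (lmax / lmin) := by field_simp

end

theorem stmt17_general {n : ℕ}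
    (P Q : EuclideanSpace ℝ (Fin n) →L[ℝ] EuclideanSpace ℝ (Fin n))
    (lmin lmax : ℝ) (hlmin : 0 < lmin) (hlmax : lmin ≤ lmax)
    (hPlow : ∀ w : EuclideanSpace ℝ (Fin n), lmin * ‖w‖ ^ 2 ≤ ⟪w, P w⟫)
    (hQlow : ∀ w : EuclideanSpace ℝ (Fin n), ‖w‖ ^ 2 / lmax ≤ ⟪w, Q w⟫)
    (hPQ : ∀ w, P (Q w) = w)
    (fv : EuclideanSpace ℝ (Fin n)) (L : ℝ)
    (x y u v : EuclideanSpace ℝ (Fin n))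
    (hv0 : v ≠ 0) (hgrow : ‖u‖ ≤ ‖v‖ + L * ‖x - y‖)
    (c : ℝ) (hcb : |c| ≤ ‖fv‖ * ‖u‖)
    (η : EuclideanSpace ℝ (Fin n)) (hη : η = (c / ⟪v, Q v⟫) • v) :
    ‖Q η‖ ≤ (1 + L * ‖x - y‖ / ‖v‖) * (lmax / lmin) * ‖fv‖ := by
  have hv : 0 < ‖v‖ := norm_pos_iff.mpr hv0
  have hlmax_pos : 0 < lmax := hlmin.trans_le hlmax
  have hQv : lmin * ‖Q v‖ ≤ ‖v‖ := by
    simpa only [hPQ] using mul_norm_le_norm_apply_of_coercive hPlow (Q v)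
  have hc : |c| / ‖v‖ ≤ (1 + L * ‖x - y‖ / ‖v‖) * ‖fv‖ := by
    calc |c| / ‖v‖ ≤ ‖fv‖ * (‖v‖ + L * ‖x - y‖) / ‖v‖ := by
          gcongr
          exact hcb.trans (mul_le_mul_of_nonneg_left hgrow (norm_nonneg fv))
      _ = (1 + L * ‖x - y‖ / ‖v‖) * ‖fv‖ := by field_simp
  calc ‖Q η‖ ≤ |c| / ‖v‖ * (lmax / lmin) := by
        rw [hη]
        exact norm_apply_smul_div_inner_le (Q := Q.toLinearMap) hlmin hlmax_pos hv0 hQv (hQlow v) c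
    _ ≤ (1 + L * ‖x - y‖ / ‖v‖) * ‖fv‖ * (lmax / lmin) := by gcongr
    _ = (1 + L * ‖x - y‖ / ‖v‖) * (lmax / lmin) * ‖fv‖ := by ring

/-- bound on the normal-cone perturbation term `‖P⁻¹η‖`.
`Q` plays the role of `P⁻¹`; `u = ∇h(x)`, `v = ∇h(y)` abstractly. -/
theorem stmt17 {n : ℕ}
    (P Q : EuclideanSpace ℝ (Fin n) →L[ℝ] EuclideanSpace ℝ (Fin n))
    (lmin lmax : ℝ) (hlmin : 0 < lmin) (hlmax : lmin ≤ lmax)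
    (hPlow : ∀ w : EuclideanSpace ℝ (Fin n), lmin * ‖w‖ ^ 2 ≤ ⟪w, P w⟫)
    (hPhigh : ∀ w : EuclideanSpace ℝ (Fin n), ⟪w, P w⟫ ≤ lmax * ‖w‖ ^ 2)
    (hQlow : ∀ w : EuclideanSpace ℝ (Fin n), ‖w‖ ^ 2 / lmax ≤ ⟪w, Q w⟫)
    (hQhigh : ∀ w : EuclideanSpace ℝ (Fin n), ⟪w, Q w⟫ ≤ ‖w‖ ^ 2 / lmin)
    (hPQ : ∀ w, P (Q w) = w) (hQP : ∀ w, Q (P w) = w)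
    (fv : EuclideanSpace ℝ (Fin n)) (L : ℝ) (hL : 0 ≤ L)
    (x y u v : EuclideanSpace ℝ (Fin n))
    (hv0 : v ≠ 0) (hgrow : ‖u‖ ≤ ‖v‖ + L * ‖x - y‖)
    (c : ℝ) (hc0 : c ≤ 0) (hcb : |c| ≤ ‖fv‖ * ‖u‖)
    (η : EuclideanSpace ℝ (Fin n)) (hη : η = (c / ⟪v, Q v⟫) • v) :
    ‖Q η‖ ≤ (1 + L * ‖x - y‖ / ‖v‖) * (lmax / lmin) * ‖fv‖ :=
  stmt17_general P Q lmin lmax hlmin hlmax hPlow hQlow hPQ fv L x y u v hv0 hgrow c hcb η hη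
end
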